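/- Let K be a CM field (a totally imaginary quadratic extension of a totally real field K₀ of degree n), with CM type Φ = (τ₁,…,τₙ) (embeddings K → ℂ, no two complex conjugate). Suppose α ∈ K satisfies τᵢ(α) = i·βᵢ with βᵢ > 0 real for all i. Then H(x,y) = 2∑ᵢ βᵢ τᵢ(x)·conj(τᵢ(y)) is a positive-definite Hermitian form on K ⊗ ℝ ≅ ℂⁿ (via Φ), and its imaginary part satisfies Im H(x,y) = −Tr_{K/ℚ}(α x ȳ) for all x, y ∈ K, where ȳ denotes the complex conjugation of K (the nontrivial element of Gal(K/K₀)). -/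

import Mathlib

open Complex Finset ComplexConjugate

/-!
The Hermitian symmetry and positivity of `H` are termwise facts about `2 ∑ βᵢ zᵢ w̄ᵢ` with
`βᵢ > 0`. For the imaginary part, the embeddings of `K` into `ℂ` are exactly the `τᵢ` and
their conjugates, so `Tr_{K/ℚ}(z) = 2 ∑ Re τᵢ(z)`; since `τᵢ(α x ȳ) = i βᵢ τᵢ(x) conj(τᵢ(y))`
and `Re (i u) = -Im u`, this trace is `-Im H(x, y)`.
-/

theorem bijective_sumElim_self_conj_comp {K ι : Type*} [Ring K] (Φ : ι → K →+* ℂ)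
    (hinj : Function.Injective Φ) (hconj : ∀ i j, Φ i ≠ (starRingEnd ℂ).comp (Φ j))
    (hcover : ∀ τ : K →+* ℂ, ∃ i, τ = Φ i ∨ τ = (starRingEnd ℂ).comp (Φ i)) :
    Function.Bijective (Sum.elim Φ fun i => (starRingEnd ℂ).comp (Φ i)) := by
  constructor
  · rintro (a | a) (b | b) h <;> simp only [Sum.elim_inl, Sum.elim_inr] at h
    · exact congrArg Sum.inl (hinj h)
    · exact absurd h (hconj a b)
    · exact absurd h.symm (hconj b a)
    · refine congrArg Sum.inr (hinj (RingHom.ext fun t => ?_))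
      simpa using congrArg (fun f : K →+* ℂ => conj (f t)) h
  · intro τ
    obtain ⟨i, hi | hi⟩ := hcover τ
    · exact ⟨Sum.inl i, hi.symm⟩
    · exact ⟨Sum.inr i, hi.symm⟩

theorem NumberField.trace_eq_two_mul_sum_re {K ι : Type*} [Field K] [NumberField K] [Fintype ι]
    (Φ : ι → K →+* ℂ) (hΦ : Function.Bijective (Sum.elim Φ fun i => (starRingEnd ℂ).comp (Φ i)))
    (z : K) : ((Algebra.trace ℚ K z : ℚ) : ℝ) = 2 * ∑ i, (Φ i z).re := by
  have hbij := (RingHom.equivRatAlgHom K ℂ).bijective.comp hΦ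
  have hsum : ((Algebra.trace ℚ K z : ℚ) : ℂ) = ∑ i, (Φ i z + conj (Φ i z)) := by
    rw [← eq_ratCast (algebraMap ℚ ℂ), trace_eq_sum_embeddings ℂ,
      ← Fintype.sum_bijective _ hbij _ (fun σ => σ z) fun _ => rfl,
      Fintype.sum_sum_type, ← Finset.sum_add_distrib]
    rfl
  simp only [add_conj] at hsum
  rw [Finset.mul_sum]
  exact_mod_cast hsum

section WeightedForm

variable {ι : Type*} [Fintype ι] {β : ι → ℝ}

theorem conj_sum_ofReal_mul_mul_conj (z w : ι → ℂ) :
    conj (∑ i, (β i : ℂ) * z i * conj (w i)) = ∑ i, (β i : ℂ) * w i * conj (z i) := by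
  simp only [map_sum, map_mul, conj_conj, conj_ofReal]
  exact Finset.sum_congr rfl fun i _ => by ring

theorem re_sum_ofReal_mul_mul_conj_self_pos (hβ : ∀ i, 0 < β i) {z : ι → ℂ} (hz : z ≠ 0) :
    0 < (∑ i, (β i : ℂ) * z i * conj (z i)).re := by
  obtain ⟨i, hi⟩ := Function.ne_iff.mp hz
  simp only [mul_assoc, mul_conj, re_sum, ← ofReal_mul, ofReal_re]
  exact Finset.sum_pos' (fun j _ => mul_nonneg (hβ j).le (normSq_nonneg _))
    ⟨i, Finset.mem_univ i, mul_pos (hβ i) (normSq_pos.mpr hi)⟩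

theorem im_sum_ofReal_mul_mul_conj (z w : ι → ℂ) :
    (∑ i, (β i : ℂ) * z i * conj (w i)).im = -∑ i, (I * (β i * (z i * conj (w i)))).re := by
  simp only [im_sum, I_mul_re, mul_assoc, im_ofReal_mul, Finset.sum_neg_distrib, neg_neg]

end WeightedForm

theorem cm_polarization_form
    (K : Type*) [Field K] [NumberField K] (n : ℕ)
    (Φ : Fin n → (K →+* ℂ)) (hΦinj : Function.Injective Φ)
    (hCM : ∀ i j, Φ i ≠ (starRingEnd ℂ).comp (Φ j))
    (hcover : ∀ τ : K →+* ℂ, ∃ i, τ = Φ i ∨ τ = (starRingEnd ℂ).comp (Φ i))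
    (c : K →+* K)
    (hc : ∀ i, (Φ i).comp c = (starRingEnd ℂ).comp (Φ i))
    (α : K) (β : Fin n → ℝ) (hβ : ∀ i, 0 < β i)
    (hα : ∀ i, Φ i α = Complex.I * (β i : ℂ))
    (H : (Fin n → ℂ) → (Fin n → ℂ) → ℂ)
    (hH : ∀ z w, H z w = 2 * ∑ i, (β i : ℂ) * z i * starRingEnd ℂ (w i)) :
    (∀ z w : Fin n → ℂ, H w z = starRingEnd ℂ (H z w)) ∧
    (∀ z : Fin n → ℂ, z ≠ 0 → 0 < (H z z).re) ∧
    (∀ x y : K, (H (fun i => Φ i x) (fun i => Φ i y)).im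
      = -((Algebra.trace ℚ K (α * x * c y) : ℚ) : ℝ)) := by
  refine ⟨fun z w => ?_, fun z hz => ?_, fun x y => ?_⟩
  · rw [hH, hH, map_mul, map_ofNat, conj_sum_ofReal_mul_mul_conj]
  · rw [hH, ← ofReal_ofNat, re_ofReal_mul]
    exact mul_pos two_pos (re_sum_ofReal_mul_mul_conj_self_pos hβ hz)
  · have hΦ : ∀ i, Φ i (α * x * c y) = I * (β i * (Φ i x * conj (Φ i y))) := fun i => by
      rw [map_mul, map_mul, hα, ← RingHom.comp_apply, hc, RingHom.comp_apply]
      ring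
    rw [hH, ← ofReal_ofNat, im_ofReal_mul, im_sum_ofReal_mul_mul_conj, NumberField.trace_eq_two_mul_sum_re Φ
      (bijective_sumElim_self_conj_comp Φ hΦinj hCM hcover)]
    simp only [hΦ, mul_neg]
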